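/- Let r ≥ 1, let F be a field, and let ζ ∈ F be a primitive 5^{r+1}-th root of unity. Let d be an integer with d ≡ 2 (mod 5) and d² ≡ −1 (mod 5^{r+1}). Then the six points of ℙ²(F) with coordinate triples (ζ²,ζ,1), (ζ^{2d},ζ^{d},1), (ζ^{−2},ζ^{−1},1), (ζ^{−2d},ζ^{−d},1), (1,0,0), (0,1,0) are in general position. -/

import Mathlib

/-!
Put `t = (ζ, ζ^d, ζ⁻¹, ζ^(-d))`. The first four points are `(t², t, 1)`, on the conic `y² = xz`,
whose point at infinity is `(1, 0, 0)`; the last point `(0, 1, 0)` is off it. On these points a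
linear form `αx + βy + γz` becomes the polynomial `αt² + βt + γ`, with `α = 0` for lines through
`(1, 0, 0)` and `β = 0` for lines through `(0, 1, 0)`; a conic through `(1, 0, 0)` and `(0, 1, 0)`
becomes a cubic in `t`. A Vandermonde argument therefore rules out every degenerate configuration
as soon as the four values `t²` are pairwise distinct (two proportional points would lie on a line
with any third point, so distinctness follows from non-collinearity). They are distinct: the
exponents of `ζ` in them are `2, 2d, -2, -2d ≡ 2, 4, 3, 1 (mod 5)` because `d ≡ 2 (mod 5)`, and
`5` divides the order of `ζ`.
-/

/-- Six points of the projective plane given by coordinate triples are *in general position* if: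
they are pairwise distinct as projective points (no two triples are proportional), no three of
them lie on a line (no nonzero linear form vanishes at three of the triples), and the six do not
all lie on a conic (no nonzero quadratic form vanishes at all six triples). -/
def InGeneralPosition6 {k : Type*} [Field k] (P : Fin 6 → Fin 3 → k) : Prop :=
  (∀ i j : Fin 6, i ≠ j → ¬∃ c : k, c ≠ 0 ∧ P j = c • P i) ∧
  (∀ i j l : Fin 6, i ≠ j → i ≠ l → j ≠ l →
    ¬∃ α β γ : k, (α, β, γ) ≠ (0, 0, 0) ∧
      ∀ m ∈ ({i, j, l} : Set (Fin 6)), α * P m 0 + β * P m 1 + γ * P m 2 = 0) ∧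
  ¬∃ a b c d e f : k, (a, b, c, d, e, f) ≠ (0, 0, 0, 0, 0, 0) ∧
    ∀ m : Fin 6,
      a * P m 0 ^ 2 + b * P m 1 ^ 2 + c * P m 2 ^ 2 +
        d * (P m 0 * P m 1) + e * (P m 0 * P m 2) + f * (P m 1 * P m 2) = 0

open Function

theorem exists_lt_lt_and_insert_eq {α : Type*} [LinearOrder α] {i j l : α} (hij : i ≠ j)
    (hil : i ≠ l) (hjl : j ≠ l) :
    ∃ a b c, a < b ∧ b < c ∧ ({a, b, c} : Set α) = {i, j, l} := by
  rcases hij.lt_or_gt with h₁ | h₁ <;> rcases hil.lt_or_gt with h₂ | h₂ <;>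
    rcases hjl.lt_or_gt with h₃ | h₃
  · exact ⟨i, j, l, h₁, h₃, rfl⟩
  · exact ⟨i, l, j, h₂, h₃, by ext; simp; tauto⟩
  · exact (lt_asymm (h₁.trans h₃) h₂).elim
  · exact ⟨l, i, j, h₂, h₁, by ext; simp; tauto⟩
  · exact ⟨j, i, l, h₁, h₂, by ext; simp; tauto⟩
  · exact (lt_asymm (h₃.trans h₁) h₂).elim
  · exact ⟨j, l, i, h₃, h₂, by ext; simp; tauto⟩
  · exact ⟨l, j, i, h₃, h₁, by ext; simp; tauto⟩

section

variable {K : Type*} [Field K]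

theorem eq_zero_of_linear_vanishing {x y a b : K} (hxy : x ≠ y) (hx : a * x + b = 0)
    (hy : a * y + b = 0) : a = 0 ∧ b = 0 := by
  have := Matrix.eq_zero_of_forall_index_sum_mul_pow_eq_zero (f := ![x, y]) (v := ![b, a])
    (by simp [Injective, Fin.forall_fin_two, hxy, hxy.symm]) (by
      simp [Fin.forall_fin_two, Fin.sum_univ_two]
      exact ⟨by linear_combination hx, by linear_combination hy⟩)
  exact ⟨congrFun this 1, congrFun this 0⟩

theorem eq_zero_of_quadratic_vanishing {x y z a b c : K} (hxy : x ≠ y) (hxz : x ≠ z)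
    (hyz : y ≠ z) (hx : a * x ^ 2 + b * x + c = 0) (hy : a * y ^ 2 + b * y + c = 0)
    (hz : a * z ^ 2 + b * z + c = 0) : a = 0 ∧ b = 0 ∧ c = 0 := by
  have := Matrix.eq_zero_of_forall_index_sum_mul_pow_eq_zero (f := ![x, y, z]) (v := ![c, b, a])
    (by simp [Injective, Fin.forall_fin_succ, *, Ne.symm]) (by
      simp [Fin.forall_fin_succ, Fin.sum_univ_three]
      exact ⟨by linear_combination hx, by linear_combination hy, by linear_combination hz⟩)
  exact ⟨congrFun this 2, congrFun this 1, congrFun this 0⟩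

theorem eq_zero_of_cubic_vanishing {t : Fin 4 → K} (ht : Injective t) {a b c d : K}
    (h : ∀ k, a * t k ^ 3 + b * t k ^ 2 + c * t k + d = 0) : a = 0 ∧ b = 0 ∧ c = 0 ∧ d = 0 := by
  have := Matrix.eq_zero_of_forall_index_sum_mul_pow_eq_zero (v := ![d, c, b, a]) ht fun k => by
    simp [Fin.sum_univ_four]
    linear_combination h k
  exact ⟨congrFun this 3, congrFun this 2, congrFun this 1, congrFun this 0⟩

theorem eq_zero_of_quadratic_vanishing_of_leading_eq_zero {x y α β γ : K} (hxy : x ≠ y)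
    (hα : α = 0) (hx : α * x ^ 2 + β * x + γ = 0) (hy : α * y ^ 2 + β * y + γ = 0) :
    α = 0 ∧ β = 0 ∧ γ = 0 := by
  subst hα
  simp only [zero_mul, zero_add] at hx hy
  exact ⟨rfl, eq_zero_of_linear_vanishing hxy hx hy⟩

theorem eq_zero_of_quadratic_vanishing_of_middle_eq_zero {x y α β γ : K} (hxy : x ^ 2 ≠ y ^ 2)
    (hβ : β = 0) (hx : α * x ^ 2 + β * x + γ = 0) (hy : α * y ^ 2 + β * y + γ = 0) :
    α = 0 ∧ β = 0 ∧ γ = 0 := by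
  subst hβ
  simp only [zero_mul, add_zero] at hx hy
  obtain ⟨hα, hγ⟩ := eq_zero_of_linear_vanishing hxy hx hy
  exact ⟨hα, rfl, hγ⟩

theorem exists_linearForm_vanishing_at_two (p q : Fin 3 → K) :
    ∃ α β γ : K, (α, β, γ) ≠ (0, 0, 0) ∧
      α * p 0 + β * p 1 + γ * p 2 = 0 ∧ α * q 0 + β * q 1 + γ * q 2 = 0 := by
  obtain ⟨v, hv, hpq⟩ := Matrix.exists_mulVec_eq_zero_iff.mpr
    (Matrix.det_zero_of_row_eq (M := ![p, q, p]) (i := 0) (j := 2) (by decide) rfl)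
  have hp := congrFun hpq 0
  have hq := congrFun hpq 1
  simp only [Matrix.mulVec, dotProduct, Fin.sum_univ_three, Pi.zero_apply,
    Matrix.cons_val_zero, Matrix.cons_val_one] at hp hq
  refine ⟨v 0, v 1, v 2, fun h => hv ?_, by linear_combination hp, by linear_combination hq⟩
  simp only [Prod.mk.injEq] at h
  ext k
  fin_cases k <;> simp [h]

theorem exists_linearForm_vanishing_of_eq_smul {ι : Type*} {P : ι → Fin 3 → K} {i j : ι} {c : K}
    (h : P j = c • P i) (l : ι) :
    ∃ α β γ : K, (α, β, γ) ≠ (0, 0, 0) ∧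
      ∀ m ∈ ({i, j, l} : Set ι), α * P m 0 + β * P m 1 + γ * P m 2 = 0 := by
  obtain ⟨α, β, γ, hne, hi, hl⟩ := exists_linearForm_vanishing_at_two (P i) (P l)
  refine ⟨α, β, γ, hne, ?_⟩
  rintro m (rfl | rfl | rfl)
  · exact hi
  · simp only [h, Pi.smul_apply, smul_eq_mul]
    linear_combination c * hi
  · exact hl

theorem IsPrimitiveRoot.dvd_sub_of_zpow_eq {ζ : K} {n : ℕ} [NeZero n] (hζ : IsPrimitiveRoot ζ n)
    {a b : ℤ} (h : ζ ^ a = ζ ^ b) : (n : ℤ) ∣ a - b := by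
  have hz : ζ ≠ 0 := hζ.ne_zero NeZero.out
  rw [← hζ.zpow_eq_one_iff_dvd, zpow_sub₀ hz, h, div_self (zpow_ne_zero _ hz)]

def conicSixPoints (t : Fin 4 → K) : Fin 6 → Fin 3 → K :=
  ![![t 0 ^ 2, t 0, 1], ![t 1 ^ 2, t 1, 1], ![t 2 ^ 2, t 2, 1], ![t 3 ^ 2, t 3, 1],
    ![1, 0, 0], ![0, 1, 0]]

variable {t : Fin 4 → K}

theorem conicSixPoints_linearForm_eq_zero (ht : Injective (t · ^ 2)) {i j l : Fin 6}
    (hij : i < j) (hjl : j < l) {α β γ : K}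
    (h : ∀ m ∈ ({i, j, l} : Set (Fin 6)),
      α * conicSixPoints t m 0 + β * conicSixPoints t m 1 + γ * conicSixPoints t m 2 = 0) :
    (α, β, γ) = (0, 0, 0) := by
  have hi := h i (by simp)
  have hj := h j (by simp)
  have hl := h l (by simp)
  have ht' : Injective t := ht.of_comp
  -- A sorted triple is (conic, conic, conic), (conic, conic, (1,0,0)), (conic, conic, (0,1,0))
  -- or (conic, (1,0,0), (0,1,0)).
  fin_cases i <;> fin_cases j <;> fin_cases l <;>
    simp [conicSixPoints] at hij hjl hi hj hl ⊢ <;>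
    first
    | exact eq_zero_of_quadratic_vanishing (ht'.ne (by decide)) (ht'.ne (by decide))
        (ht'.ne (by decide)) hi hj hl
    | exact eq_zero_of_quadratic_vanishing_of_leading_eq_zero (ht'.ne (by decide)) hl hi hj
    | exact eq_zero_of_quadratic_vanishing_of_middle_eq_zero (ht.ne (by decide)) hl hi hj
    | exact ⟨hj, hl, by simpa [hj, hl] using hi⟩

theorem conicSixPoints_quadraticForm_eq_zero (ht : Injective t) {a b c d e f : K}
    (h : ∀ m, a * conicSixPoints t m 0 ^ 2 + b * conicSixPoints t m 1 ^ 2 +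
      c * conicSixPoints t m 2 ^ 2 + d * (conicSixPoints t m 0 * conicSixPoints t m 1) +
      e * (conicSixPoints t m 0 * conicSixPoints t m 2) +
      f * (conicSixPoints t m 1 * conicSixPoints t m 2) = 0) :
    (a, b, c, d, e, f) = (0, 0, 0, 0, 0, 0) := by
  have ha := h 4
  have hb := h 5
  simp [conicSixPoints] at ha hb
  subst ha hb
  have hcubic (k : Fin 4) : d * t k ^ 3 + e * t k ^ 2 + f * t k + c = 0 := by
    have hk := h k.castSucc.castSucc
    fin_cases k <;> simp [conicSixPoints] at hk ⊢ <;> linear_combination hk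
  obtain ⟨rfl, rfl, rfl, rfl⟩ := eq_zero_of_cubic_vanishing ht hcubic
  rfl

theorem inGeneralPosition6_conicSixPoints (ht : Injective (t · ^ 2)) :
    InGeneralPosition6 (conicSixPoints t) := by
  have hcol : ∀ i j l : Fin 6, i ≠ j → i ≠ l → j ≠ l → ¬∃ α β γ : K, (α, β, γ) ≠ (0, 0, 0) ∧
      ∀ m ∈ ({i, j, l} : Set (Fin 6)), α * conicSixPoints t m 0 + β * conicSixPoints t m 1 +
        γ * conicSixPoints t m 2 = 0 := by
    rintro i j l hij hil hjl ⟨α, β, γ, hne, h⟩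
    obtain ⟨a, b, c, hab, hbc, habc⟩ := exists_lt_lt_and_insert_eq hij hil hjl
    rw [← habc] at h
    exact hne (conicSixPoints_linearForm_eq_zero ht hab hbc h)
  refine ⟨fun i j hij ⟨c, _, h⟩ => ?_, hcol,
    fun ⟨a, b, c, d, e, f, hne, h⟩ => hne (conicSixPoints_quadraticForm_eq_zero ht.of_comp h)⟩
  obtain ⟨l, -, hl⟩ := Finset.exists_mem_notMem_of_card_lt_card (s := {i, j}) (t := .univ)
    (Finset.card_le_two.trans_lt (by simp))
  simp only [Finset.mem_insert, Finset.mem_singleton, not_or] at hl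
  exact hcol i j l hij (Ne.symm hl.1) (Ne.symm hl.2) (exists_linearForm_vanishing_of_eq_smul h l)

end

theorem sixPoints_generalPosition_general (r : ℕ) {F : Type*} [Field F] (ζ : F)
    (hζ : IsPrimitiveRoot ζ (5 ^ (r + 1))) (d : ℤ) (hd1 : d ≡ 2 [ZMOD 5]) :
    InGeneralPosition6
      ![![ζ ^ 2, ζ, 1], ![ζ ^ (2 * d), ζ ^ d, 1], ![ζ ^ (-2 : ℤ), ζ ^ (-1 : ℤ), 1],
        ![ζ ^ (-(2 * d)), ζ ^ (-d), 1], ![1, 0, 0], ![0, 1, 0]] := by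
  set e : Fin 4 → ℤ := ![1, d, -1, -d]
  have he (i j : Fin 4) (h : (5 : ℤ) ∣ e i * 2 - e j * 2) : i = j := by
    have : d % 5 = 2 := hd1
    fin_cases i <;> fin_cases j <;> simp [e] at h ⊢ <;> omega
  have ht : Injective fun k => (ζ ^ e k) ^ 2 := by
    intro i j h
    simp only [← zpow_natCast, ← zpow_mul] at h
    refine he i j (dvd_trans ?_ (hζ.dvd_sub_of_zpow_eq h))
    exact_mod_cast dvd_pow_self 5 r.succ_ne_zero
  convert inGeneralPosition6_conicSixPoints ht using 1
  funext i k
  fin_cases i <;> fin_cases k <;> simp [conicSixPoints, e, mul_comm (2 : ℤ), zpow_mul]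

/-- Let `r ≥ 1`, let `F` be a field, and let `ζ ∈ F` be a primitive `5^(r+1)`-th root of unity.
Let `d` be an integer with `d ≡ 2 (mod 5)` and `d² ≡ −1 (mod 5^(r+1))`.  Then the six points of
`ℙ²(F)` with coordinate triples `(ζ²,ζ,1), (ζ^(2d),ζ^d,1), (ζ^(−2),ζ^(−1),1),
(ζ^(−2d),ζ^(−d),1), (1,0,0), (0,1,0)` are in general position. -/
theorem sixPoints_generalPosition (r : ℕ) (hr : 1 ≤ r) {F : Type*} [Field F] (ζ : F)
    (hζ : IsPrimitiveRoot ζ (5 ^ (r + 1))) (d : ℤ) (hd1 : d ≡ 2 [ZMOD 5])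
    (hd2 : d ^ 2 ≡ -1 [ZMOD (5 ^ (r + 1))]) :
    InGeneralPosition6
      ![![ζ ^ 2, ζ, 1], ![ζ ^ (2 * d), ζ ^ d, 1], ![ζ ^ (-2 : ℤ), ζ ^ (-1 : ℤ), 1],
        ![ζ ^ (-(2 * d)), ζ ^ (-d), 1], ![1, 0, 0], ![0, 1, 0]] :=
  sixPoints_generalPosition_general r ζ hζ d hd1
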